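/- arXiv:1207.5871 — 4 statements merged into one kernel-verified Lean document; each statement's English description precedes it below -/
import Mathlib

section
/- Let H be a separable Hilbert space, μ a finite measure, and F : Ω → H weakly measurable with ∫_Ω ‖F(ω)‖² dμ < ∞. The bounded linear operator T defined by ⟨Tu, v⟩ = ∫_Ω ⟨u, F(ω)⟩⟨F(ω), v⟩ dμ(ω) is compact. -/
/-!
Separability makes a weakly measurable `F` strongly measurable: it is the limit of its partial
Fourier sums along a Hilbert basis, which is countable. The rank-one operators `F ω ⊗ F ω` then
form a Bochner integrable family in `H →L[ℝ] H`, since `‖F ω ⊗ F ω‖ = ‖F ω‖ ^ 2`, and `T` is their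
integral. Rank-one operators are compact and the compact operators form a closed subspace, so
the integral is compact.
-/

open MeasureTheory

section Separable

open scoped InnerProductSpace

variable {𝕜 E : Type*} [RCLike 𝕜] [NormedAddCommGroup E] [InnerProductSpace 𝕜 E]
  [TopologicalSpace.SeparableSpace E]

theorem Orthonormal.countable {ι : Type*} {v : ι → E} (hv : Orthonormal 𝕜 v) : Countable ι := by
  refine Pairwise.countable_of_isOpen_disjoint (s := fun i => Metric.ball (v i) (1 / 2))
    (fun i j hij => Metric.ball_disjoint_ball ?_) (fun _ => Metric.isOpen_ball)
    (fun _ => Metric.nonempty_ball.2 one_half_pos)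
  have hsq : ‖v i - v j‖ ^ 2 = 2 := by
    rw [@norm_sub_sq 𝕜, hv.inner_eq_zero hij, hv.norm_eq_one, hv.norm_eq_one]
    norm_num
  rw [dist_eq_norm]
  nlinarith [norm_nonneg (v i - v j)]

theorem measurable_of_measurable_inner [CompleteSpace E] [MeasurableSpace E] [BorelSpace E]
    {Ω : Type*} [MeasurableSpace Ω] {F : Ω → E}
    (hF : ∀ u : E, Measurable fun ω => ⟪u, F ω⟫_𝕜) : Measurable F := by
  obtain ⟨w, b, -⟩ := exists_hilbertBasis 𝕜 E
  have : Countable w := b.orthonormal.countable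
  refine measurable_of_tendsto_metrizable' Filter.atTop
    (f := fun s : Finset w => fun ω => ∑ i ∈ s, ⟪b i, F ω⟫_𝕜 • b i)
    (fun s => Finset.measurable_sum _ fun i _ => (hF (b i)).smul_const _)
    (tendsto_pi_nhds.2 fun ω => ?_)
  have hsum := b.hasSum_repr (F ω)
  simp only [b.repr_apply_apply] at hsum
  exact hsum

end Separable

theorem isCompactOperator_rankOne {𝕜 E F : Type*} [RCLike 𝕜] [NormedAddCommGroup E]
    [InnerProductSpace 𝕜 E] [NormedAddCommGroup F] [InnerProductSpace 𝕜 F] (x : E) (y : F) :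
    IsCompactOperator (InnerProductSpace.rankOne 𝕜 x y) :=
  (isCompactOperator_of_locallyCompactSpace_rng
    (ContinuousLinearMap.toSpanSingleton 𝕜 x) :).comp_clm (innerSL 𝕜 y)

theorem Submodule.integral_mem_of_isClosed {Ω E : Type*} [MeasurableSpace Ω] {μ : Measure Ω}
    [NormedAddCommGroup E] [NormedSpace ℝ E] [CompleteSpace E] {S : Submodule ℝ E}
    (hS : IsClosed (S : Set E)) {f : Ω → E} (hf : ∀ ω, f ω ∈ S) : ∫ ω, f ω ∂μ ∈ S := by
  by_cases hfi : Integrable f μ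
  · have : CompleteSpace S := hS.completeSpace_coe
    let g : Ω → S := fun ω => ⟨f ω, hf ω⟩
    have hg : Integrable g μ :=
      ⟨Topology.IsEmbedding.subtypeVal.aestronglyMeasurable_comp_iff.1 hfi.1, hfi.2⟩
    rw [show f = fun ω => S.subtypeL (g ω) from rfl, S.subtypeL.integral_comp_comm hg]
    exact (∫ ω, g ω ∂μ).2
  · rw [integral_undef hfi]
    exact S.zero_mem

open scoped RealInnerProductSpace

section RankOneIntegral

open InnerProductSpace

variable {H Ω : Type*} [NormedAddCommGroup H] [InnerProductSpace ℝ H] [MeasurableSpace Ω]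
  {μ : Measure Ω} {F : Ω → H}

theorem integrable_rankOne_self (hF : AEStronglyMeasurable F μ)
    (hFint : Integrable (fun ω => ‖F ω‖ ^ 2) μ) :
    Integrable (fun ω => rankOne ℝ (F ω) (F ω)) μ := by
  have hcont : Continuous fun x : H => rankOne ℝ x x :=
    (rankOne ℝ).continuous.clm_apply continuous_id
  refine hFint.congr' (hcont.comp_aestronglyMeasurable hF)
    (Filter.Eventually.of_forall fun ω => ?_)
  simp [sq]

theorem inner_integral_rankOne_self_apply [CompleteSpace H]
    (hF : Integrable (fun ω => rankOne ℝ (F ω) (F ω)) μ) (u v : H) :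
    ⟪(∫ ω, rankOne ℝ (F ω) (F ω) ∂μ) u, v⟫ = ∫ ω, ⟪u, F ω⟫ * ⟪F ω, v⟫ ∂μ := by
  rw [ContinuousLinearMap.integral_apply hF, real_inner_comm, ← integral_inner]
  · simp [real_inner_smul_right, real_inner_comm]
  · exact (ContinuousLinearMap.apply ℝ H u).integrable_comp hF

end RankOneIntegral

theorem stmt_7_general {H : Type*} [NormedAddCommGroup H] [InnerProductSpace ℝ H] [CompleteSpace H]
    [TopologicalSpace.SeparableSpace H]
    {Ω : Type*} [MeasurableSpace Ω] (μ : Measure Ω)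
    (F : Ω → H) (hFmeas : ∀ u : H, Measurable fun ω => ⟪F ω, u⟫)
    (hFint : Integrable (fun ω => ‖F ω‖ ^ 2) μ)
    (T : H →L[ℝ] H)
    (hT : ∀ u v : H, ⟪T u, v⟫ = ∫ ω, ⟪u, F ω⟫ * ⟪F ω, v⟫ ∂μ) :
    IsCompactOperator (T : H → H) := by
  borelize H
  have hF : Measurable F :=
    measurable_of_measurable_inner (𝕜 := ℝ) fun u => by simpa only [real_inner_comm] using hFmeas u
  have hR := integrable_rankOne_self hF.aestronglyMeasurable hFint
  have hT_eq : T = ∫ ω, InnerProductSpace.rankOne ℝ (F ω) (F ω) ∂μ :=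
    ContinuousLinearMap.ext fun u => ext_inner_right ℝ fun v => by
      rw [hT, inner_integral_rankOne_self_apply hR]
  rw [hT_eq]
  exact Submodule.integral_mem_of_isClosed (S := compactOperator (RingHom.id ℝ) H H)
    isClosed_setOfPred_isCompactOperator fun ω => isCompactOperator_rankOne _ _

/-- On a separable Hilbert space, the operator `T` defined by
`⟪T u, v⟫ = ∫ ⟪u, F ω⟫ ⟪F ω, v⟫ dμ(ω)` is compact. -/
theorem stmt_7 {H : Type*} [NormedAddCommGroup H] [InnerProductSpace ℝ H] [CompleteSpace H]
    [TopologicalSpace.SeparableSpace H]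
    {Ω : Type*} [MeasurableSpace Ω] (μ : Measure Ω) [IsFiniteMeasure μ]
    (F : Ω → H) (hFmeas : ∀ u : H, Measurable fun ω => ⟪F ω, u⟫)
    (hFint : Integrable (fun ω => ‖F ω‖ ^ 2) μ)
    (T : H →L[ℝ] H)
    (hT : ∀ u v : H, ⟪T u, v⟫ = ∫ ω, ⟪u, F ω⟫ * ⟪F ω, v⟫ ∂μ) :
    IsCompactOperator (T : H → H) :=
  stmt_7_general μ F hFmeas hFint T hT
end

section
/- Let H_K be an RKHS on X with continuous kernel K, Ω ⊆ X compact, and μ a finite Borel measure on Ω. For any two closed subspaces U and V of H_K, |E(U) - E(V)| ≤ 2 K_Ω ‖P_U - P_V‖, where E(W) = ∫_Ω dist²(K(t,·), W) dμ(t), K_Ω = ∫_Ω K(t,t) dμ(t), and P_W denotes orthogonal projection onto W. -/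
open MeasureTheory
open scoped RealInnerProductSpace

/-! For an orthogonal projection `P` onto `W`, `dist(x, W) = ‖x - P x‖ ≤ ‖x‖`. Writing the
difference of squares as (sum) × (difference), with the sum at most `2‖x‖` and the difference
at most `‖(P - Q) x‖ ≤ ‖P - Q‖ ‖x‖`, gives the pointwise bound `2 ‖P - Q‖ K(t,t)` at
`x = K(t,·)`, which integrates to the claim. Continuity of `K` makes the feature map
continuous, so all integrands are integrable on the compact `Ω`. -/

theorem abs_norm_sq_sub_norm_sq_le {E : Type*} [SeminormedAddCommGroup E] {a b : E} {r : ℝ}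
    (ha : ‖a‖ ≤ r) (hb : ‖b‖ ≤ r) : |‖a‖ ^ 2 - ‖b‖ ^ 2| ≤ 2 * r * ‖a - b‖ := by
  have hsum : |‖a‖ + ‖b‖| ≤ 2 * r := by
    rw [abs_of_nonneg (by positivity)]
    linarith
  calc |‖a‖ ^ 2 - ‖b‖ ^ 2| = |‖a‖ + ‖b‖| * |‖a‖ - ‖b‖| := by rw [← abs_mul]; ring_nf
    _ ≤ 2 * r * ‖a - b‖ :=
      mul_le_mul hsum (abs_norm_sub_norm_le a b) (abs_nonneg _) ((abs_nonneg _).trans hsum)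

section InnerProductSpace

variable {H : Type*} [NormedAddCommGroup H] [InnerProductSpace ℝ H]

theorem norm_sub_le_norm_of_inner_eq_zero {x p : H} (h : ⟪x - p, p⟫ = 0) : ‖x - p‖ ≤ ‖x‖ := by
  have hpyth := norm_add_sq_eq_norm_sq_add_norm_sq_real h
  rw [sub_add_cancel] at hpyth
  nlinarith [norm_nonneg (x - p), norm_nonneg x, sq_nonneg ‖p‖]

theorem Metric.infDist_submodule_eq_norm_sub {U : Submodule ℝ H} {x p : H} (hp : p ∈ U)
    (horth : ∀ w ∈ U, ⟪x - p, w⟫ = 0) : Metric.infDist x (U : Set H) = ‖x - p‖ := by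
  have : Nonempty U := ⟨0⟩
  rw [Metric.infDist_eq_iInf]
  simp only [dist_eq_norm]
  exact ((Submodule.norm_eq_iInf_iff_real_inner_eq_zero U hp).2 horth).symm

theorem abs_norm_sub_apply_sq_sub_le {U V : Submodule ℝ H} {P Q : H →L[ℝ] H}
    (hP : ∀ v : H, P v ∈ U ∧ ∀ w ∈ U, ⟪v - P v, w⟫ = 0)
    (hQ : ∀ v : H, Q v ∈ V ∧ ∀ w ∈ V, ⟪v - Q v, w⟫ = 0) (x : H) :
    |‖x - P x‖ ^ 2 - ‖x - Q x‖ ^ 2| ≤ 2 * ‖P - Q‖ * ‖x‖ ^ 2 := by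
  have hdiff : ‖(x - P x) - (x - Q x)‖ ≤ ‖P - Q‖ * ‖x‖ := by
    rw [sub_sub_sub_cancel_left, ← norm_neg, neg_sub]
    exact (P - Q).le_opNorm x
  calc |‖x - P x‖ ^ 2 - ‖x - Q x‖ ^ 2| ≤ 2 * ‖x‖ * ‖(x - P x) - (x - Q x)‖ :=
        abs_norm_sq_sub_norm_sq_le (norm_sub_le_norm_of_inner_eq_zero ((hP x).2 _ (hP x).1))
          (norm_sub_le_norm_of_inner_eq_zero ((hQ x).2 _ (hQ x).1))
    _ ≤ 2 * ‖x‖ * (‖P - Q‖ * ‖x‖) := by gcongr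
    _ = 2 * ‖P - Q‖ * ‖x‖ ^ 2 := by ring

theorem continuous_of_continuous_inner {X : Type*} [TopologicalSpace X] {k : X → H}
    (hk : Continuous fun p : X × X => ⟪k p.1, k p.2⟫) : Continuous k := by
  rw [continuous_iff_continuousAt]
  intro x
  have hsq : Continuous fun y => ⟪k y, k y⟫ - 2 * ⟪k y, k x⟫ + ⟪k x, k x⟫ :=
    ((hk.comp (continuous_id.prodMk continuous_id)).sub
      (continuous_const.mul (hk.comp (continuous_id.prodMk continuous_const)))).add
      continuous_const
  have hnorm : Continuous fun y => ‖k y - k x‖ := by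
    convert hsq.sqrt using 2 with y
    rw [real_inner_self_eq_norm_sq, real_inner_self_eq_norm_sq, ← norm_sub_sq_real,
      Real.sqrt_sq (norm_nonneg _)]
  rw [ContinuousAt, tendsto_iff_norm_sub_tendsto_zero]
  simpa using hnorm.tendsto x

end InnerProductSpace

theorem stmt_10_general {X : Type*} [TopologicalSpace X] [T2Space X] [MeasurableSpace X]
    [OpensMeasurableSpace X] {H : Type*} [NormedAddCommGroup H] [InnerProductSpace ℝ H]
    (k : X → H) (K : X → X → ℝ) (hK : ∀ x y : X, K x y = ⟪k x, k y⟫)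
    (hKcont : Continuous fun p : X × X => K p.1 p.2)
    (Ω : Set X) (hΩ : IsCompact Ω) (μ : Measure X) [IsFiniteMeasure μ]
    (U V : Submodule ℝ H)
    (P Q : H →L[ℝ] H)
    (hP : ∀ v : H, P v ∈ U ∧ ∀ w ∈ U, ⟪v - P v, w⟫ = 0)
    (hQ : ∀ v : H, Q v ∈ V ∧ ∀ w ∈ V, ⟪v - Q v, w⟫ = 0) :
    |(∫ t in Ω, Metric.infDist (k t) (U : Set H) ^ 2 ∂μ) -
        ∫ t in Ω, Metric.infDist (k t) (V : Set H) ^ 2 ∂μ| ≤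
      2 * (∫ t in Ω, K t t ∂μ) * ‖P - Q‖ := by
  have hk : Continuous k := continuous_of_continuous_inner (by simpa only [hK] using hKcont)
  have hdistU (t : X) := Metric.infDist_submodule_eq_norm_sub (hP (k t)).1 (hP (k t)).2
  have hdistV (t : X) := Metric.infDist_submodule_eq_norm_sub (hQ (k t)).1 (hQ (k t)).2
  have hint (R : H →L[ℝ] H) : IntegrableOn (fun t => ‖k t - R (k t)‖ ^ 2) Ω μ :=
    ((hk.sub (R.continuous.comp hk)).norm.pow 2).continuousOn.integrableOn_compact hΩ
  have hintK : IntegrableOn (fun t => K t t) Ω μ :=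
    (hKcont.comp (continuous_id.prodMk continuous_id)).continuousOn.integrableOn_compact hΩ
  simp only [hdistU, hdistV]
  rw [← integral_sub (hint P) (hint Q), ← Real.norm_eq_abs]
  calc ‖∫ t in Ω, ‖k t - P (k t)‖ ^ 2 - ‖k t - Q (k t)‖ ^ 2 ∂μ‖
      ≤ ∫ t in Ω, 2 * ‖P - Q‖ * K t t ∂μ := by
        refine norm_integral_le_of_norm_le (hintK.const_mul _) (ae_of_all _ fun t => ?_)
        rw [Real.norm_eq_abs, hK, real_inner_self_eq_norm_sq]
        exact abs_norm_sub_apply_sq_sub_le hP hQ (k t)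
    _ = 2 * (∫ t in Ω, K t t ∂μ) * ‖P - Q‖ := by rw [integral_const_mul]; ring

/-- Lipschitz bound: for closed subspaces `U`, `V` of an RKHS with continuous kernel `K`
on a compact set `Ω` with finite Borel measure `μ`,
`|E(U) - E(V)| ≤ 2 K_Ω ‖P_U - P_V‖` where `E(W) = ∫_Ω dist²(K(t,·), W) dμ(t)` and
`K_Ω = ∫_Ω K(t,t) dμ(t)`.  Here `P`, `Q` are the orthogonal projections onto `U`, `V`. -/
theorem stmt_10 {X : Type*} [TopologicalSpace X] [T2Space X] [MeasurableSpace X]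
    [OpensMeasurableSpace X] {H : Type*} [NormedAddCommGroup H] [InnerProductSpace ℝ H]
    [CompleteSpace H]
    (k : X → H) (K : X → X → ℝ) (hK : ∀ x y : X, K x y = ⟪k x, k y⟫)
    (hKcont : Continuous fun p : X × X => K p.1 p.2)
    (Ω : Set X) (hΩ : IsCompact Ω) (μ : Measure X) [IsFiniteMeasure μ]
    (U V : Submodule ℝ H) (hU : IsClosed (U : Set H)) (hV : IsClosed (V : Set H))
    (P Q : H →L[ℝ] H)
    (hP : ∀ v : H, P v ∈ U ∧ ∀ w ∈ U, ⟪v - P v, w⟫ = 0)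
    (hQ : ∀ v : H, Q v ∈ V ∧ ∀ w ∈ V, ⟪v - Q v, w⟫ = 0) :
    |(∫ t in Ω, Metric.infDist (k t) (U : Set H) ^ 2 ∂μ) -
        ∫ t in Ω, Metric.infDist (k t) (V : Set H) ^ 2 ∂μ| ≤
      2 * (∫ t in Ω, K t t ∂μ) * ‖P - Q‖ :=
  stmt_10_general k K hK hKcont Ω hΩ μ U V P Q hP hQ
end

section
/- Let H be a Hilbert space, f_1,...,f_n and h_1,...,h_n vectors with ⟨f_j, h_k⟩ = 0 for all j, k, such that the Gram matrices A = [⟨f_k, f_j⟩] and B = [⟨h_k, h_j⟩] are both nonsingular. Let U = span{f_j} and Ũ = span{f_j + h_j}. Then ‖P_U - P_Ũ‖² = λ_max(B(A+B)^{-1}), where λ_max denotes the largest eigenvalue. -/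
/-!
Write `g = f + h`. Orthogonality of the two families makes `A + B` the Gram matrix of `g`, and
conjugating by `(A + B)^{1/2}` turns the hypothesis on `c` into the Loewner inequality
`B ≤ c (A + B)`, i.e. `‖∑ xⱼ hⱼ‖² ≤ c ‖∑ xⱼ gⱼ‖²` for all `x`, with equality at a generalized
eigenvector `z`. Since `(P_U - P_Ũ)(∑ zⱼ gⱼ) = -∑ zⱼ hⱼ`, this equality gives `‖P_U - P_Ũ‖² ≥ c`.

For the upper bound write `w = v + u` with `v ∈ U`, `u ⊥ U`; then `(P_U - P_Ũ) w` is the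
orthogonal sum of `v - P_Ũ v` and `-P_Ũ u`. For `v = ∑ xⱼ fⱼ`, comparing `v` with the point
`(1 - c) ∑ xⱼ gⱼ` of `Ũ` gives `‖v - P_Ũ v‖² ≤ c ‖v‖²`. If `P_Ũ u = ∑ zⱼ gⱼ`, then
`‖P_Ũ u‖² = ⟪u, ∑ zⱼ hⱼ⟫`, and Cauchy–Schwarz gives `‖P_Ũ u‖² ≤ c ‖u‖²`.
-/

open scoped RealInnerProductSpace MatrixOrder ComplexOrder

namespace Matrix

variable {n : Type*} [Fintype n] [DecidableEq n]

theorem exists_mulVec_eq_smul_of_mem_spectrum {K : Type*} [Field K] {M : Matrix n n K} {r : K}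
    (hr : r ∈ spectrum K M) : ∃ v ≠ 0, M *ᵥ v = r • v := by
  rw [← spectrum_toLin', ← Module.End.hasEigenvalue_iff_mem_spectrum] at hr
  obtain ⟨v, hv⟩ := hr.exists_hasEigenvector
  exact ⟨v, hv.2, by simpa using hv.apply_eq_smul⟩

theorem exists_mulVec_eq_smul_mulVec_of_mul_inv {K : Type*} [Field K] {B G : Matrix n n K}
    (hG : IsUnit G) {r : K} (h : ∃ v ≠ 0, (B * G⁻¹) *ᵥ v = r • v) :
    ∃ z ≠ 0, B *ᵥ z = r • G *ᵥ z := by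
  obtain ⟨v, hv, hBv⟩ := h
  have hGv : G *ᵥ (G⁻¹ *ᵥ v) = v := by
    rw [mulVec_mulVec, mul_nonsing_inv G ((isUnit_iff_isUnit_det G).mp hG), one_mulVec]
  refine ⟨G⁻¹ *ᵥ v, fun h0 => hv ?_, ?_⟩
  · rw [← hGv, h0, mulVec_zero]
  · rw [mulVec_mulVec, hBv, hGv]

variable {𝕜 : Type*} [RCLike 𝕜]

theorem le_smul_of_forall_mem_spectrum_mul_inv_le {B G : Matrix n n 𝕜} (hB : B.IsHermitian)
    (hG : G.PosDef) {c : ℝ} (hc : ∀ r ∈ spectrum ℝ (B * G⁻¹), r ≤ c) : B ≤ c • G := by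
  set S := CFC.sqrt G
  have hSS : S * S = G := CFC.sqrt_mul_sqrt_self G hG.posSemidef.nonneg
  have hS : IsSelfAdjoint S := IsSelfAdjoint.of_nonneg (CFC.sqrt_nonneg G)
  have hSinv : IsSelfAdjoint S⁻¹ := by
    rw [hG.posSemidef.inv_sqrt]; exact IsSelfAdjoint.of_nonneg (CFC.sqrt_nonneg _)
  have hSu : IsUnit S := isUnit_of_mul_isUnit_left (hSS.symm ▸ hG.isUnit :)
  have hSSinv : S * S⁻¹ = 1 := mul_nonsing_inv S ((isUnit_iff_isUnit_det S).mp hSu)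
  have hSinvS : S⁻¹ * S = 1 := nonsing_inv_mul S ((isUnit_iff_isUnit_det S).mp hSu)
  set M := S⁻¹ * B * S⁻¹
  have hspec : spectrum ℝ M = spectrum ℝ (B * G⁻¹) := by
    rw [← spectrum.units_conjugate (u := hSu.unit)]
    congr 1
    simp only [IsUnit.unit_spec, coe_units_inv, M, ← hSS, mul_inv_rev]
    simp only [← mul_assoc, hSSinv, one_mul]
  have hM : M ≤ algebraMap ℝ _ c :=
    le_algebraMap_of_spectrum_le (fun r hr => hc r (hspec ▸ hr))
      (hB.isSelfAdjoint.conjugate_self hSinv)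
  have hSMS : S * M * S = B := by
    simp only [M, ← mul_assoc, hSSinv, one_mul]
    rw [mul_assoc, hSinvS, mul_one]
  have hScS : S * algebraMap ℝ _ c * S = c • G := by
    rw [Algebra.algebraMap_eq_smul_one, mul_smul_comm, mul_one, smul_mul_assoc, hSS]
  simpa only [hSMS, hScS] using IsSelfAdjoint.conjugate_le_conjugate hM hS

end Matrix

instance FiniteDimensional.span_range {K V ι : Type*} [DivisionRing K] [AddCommGroup V]
    [Module K V] [Finite ι] (v : ι → V) : FiniteDimensional K (Submodule.span K (Set.range v)) :=
  FiniteDimensional.span_of_finite K (Set.finite_range v)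

theorem ContinuousLinearMap.sq_opNorm_eq_of_forall_le_of_eq {𝕜 E F : Type*}
    [NontriviallyNormedField 𝕜] [NormedAddCommGroup E] [NormedSpace 𝕜 E]
    [NormedAddCommGroup F] [NormedSpace 𝕜 F] (T : E →L[𝕜] F) {c : ℝ}
    (hle : ∀ w, ‖T w‖ ^ 2 ≤ c * ‖w‖ ^ 2) {v : E} (hv : v ≠ 0)
    (heq : ‖T v‖ ^ 2 = c * ‖v‖ ^ 2) : ‖T‖ ^ 2 = c := by
  have hv' : 0 < ‖v‖ ^ 2 := pow_pos (norm_pos_iff.2 hv) 2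
  have hc : 0 ≤ c := nonneg_of_mul_nonneg_left (heq ▸ sq_nonneg _) hv'
  apply le_antisymm
  · have hT : ‖T‖ ≤ √c := T.opNorm_le_bound (Real.sqrt_nonneg c) fun w => by
      rw [← Real.sqrt_sq (norm_nonneg (T w)), ← Real.sqrt_sq (norm_nonneg w), ← Real.sqrt_mul hc]
      exact Real.sqrt_le_sqrt (hle w)
    calc ‖T‖ ^ 2 ≤ √c ^ 2 := pow_le_pow_left₀ (norm_nonneg _) hT 2
      _ = c := Real.sq_sqrt hc
  · refine le_of_mul_le_mul_right ?_ hv'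
    rw [← heq, ← mul_pow]
    exact pow_le_pow_left₀ (norm_nonneg _) (T.le_opNorm v) 2

namespace Submodule

variable {𝕜 E : Type*} [RCLike 𝕜] [NormedAddCommGroup E] [InnerProductSpace 𝕜 E]

theorem eq_starProjection_of_forall_mem_of_inner_eq_zero {K : Submodule 𝕜 E}
    [K.HasOrthogonalProjection] {P : E →L[𝕜] E}
    (hP : ∀ v, P v ∈ K ∧ ∀ w ∈ K, inner 𝕜 (v - P v) w = 0) : P = K.starProjection :=
  ContinuousLinearMap.ext fun v =>
    (eq_starProjection_of_mem_of_inner_eq_zero (hP v).1 (hP v).2).symm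

theorem norm_sub_starProjection_le (K : Submodule 𝕜 E) [K.HasOrthogonalProjection]
    (v : E) {y : E} (hy : y ∈ K) : ‖v - K.starProjection v‖ ≤ ‖v - y‖ := by
  rw [K.starProjection_minimal v]
  exact ciInf_le ⟨0, Set.forall_mem_range.2 fun _ => norm_nonneg _⟩ (⟨y, hy⟩ : K)

theorem sq_norm_starProjection_sub_starProjection_apply_le (K L : Submodule 𝕜 E)
    [K.HasOrthogonalProjection] [L.HasOrthogonalProjection] {c : ℝ}
    (hK : ∀ v ∈ K, ‖v - L.starProjection v‖ ^ 2 ≤ c * ‖v‖ ^ 2)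
    (hKperp : ∀ u ∈ Kᗮ, ‖L.starProjection u‖ ^ 2 ≤ c * ‖u‖ ^ 2) (w : E) :
    ‖(K.starProjection - L.starProjection) w‖ ^ 2 ≤ c * ‖w‖ ^ 2 := by
  set v := K.starProjection w
  set u := Kᗮ.starProjection w
  have hsplit : (K.starProjection - L.starProjection) w =
      (v - L.starProjection v) + -L.starProjection u := by
    have hw : L.starProjection w = L.starProjection (v + u) := by
      rw [K.starProjection_add_starProjection_orthogonal w]
    rw [sub_apply, hw, map_add]
    abel
  have horth : inner 𝕜 (v - L.starProjection v) (-L.starProjection u) = 0 := by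
    rw [inner_neg_right, L.starProjection_inner_eq_zero v _ (L.starProjection_apply_mem u),
      neg_zero]
  rw [hsplit, sq, norm_add_sq_eq_norm_sq_add_norm_sq_of_inner_eq_zero _ _ horth, norm_neg,
    K.norm_sq_eq_add_norm_sq_starProjection w, ← sq, ← sq]
  linarith [hK v (K.starProjection_apply_mem w), hKperp u (Kᗮ.starProjection_apply_mem w)]

end Submodule

open Matrix Submodule

section GramFamilies

variable {H : Type*} [NormedAddCommGroup H] [InnerProductSpace ℝ H] {ι : Type*}

theorem gram_add_of_inner_eq_zero {f h : ι → H} (horth : ∀ i j, ⟪f i, h j⟫ = 0) :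
    gram ℝ (f + h) = gram ℝ f + gram ℝ h := by
  ext i j
  simp [inner_add_left, inner_add_right, horth, real_inner_comm (f _) (h _)]

variable [Fintype ι]

theorem inner_sum_smul_sum_smul_eq_zero {f h : ι → H} (horth : ∀ i j, ⟪f i, h j⟫ = 0)
    (x y : ι → ℝ) : ⟪∑ i, x i • f i, ∑ j, y j • h j⟫ = 0 := by
  simp [sum_inner, inner_sum, real_inner_smul_left, real_inner_smul_right, horth]

theorem sum_smul_add (f h : ι → H) (x : ι → ℝ) :
    ∑ i, x i • (f + h) i = ∑ i, x i • f i + ∑ i, x i • h i := by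
  simp only [Pi.add_apply, smul_add, Finset.sum_add_distrib]

theorem sq_norm_sum_smul_add {f h : ι → H} (horth : ∀ i j, ⟪f i, h j⟫ = 0) (x : ι → ℝ) :
    ‖∑ i, x i • (f + h) i‖ ^ 2 = ‖∑ i, x i • f i‖ ^ 2 + ‖∑ i, x i • h i‖ ^ 2 := by
  rw [sum_smul_add, norm_add_sq_real, inner_sum_smul_sum_smul_eq_zero horth]
  ring

theorem sum_smul_mem_span_range (g : ι → H) (x : ι → ℝ) :
    ∑ i, x i • g i ∈ span ℝ (Set.range g) :=
  (mem_span_range_iff_exists_fun ℝ).2 ⟨x, rfl⟩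

theorem sq_norm_sum_smul_le_of_gram_le {g₁ g₂ : ι → H} {c : ℝ}
    (hle : gram ℝ g₁ ≤ c • gram ℝ g₂) (x : ι → ℝ) :
    ‖∑ i, x i • g₁ i‖ ^ 2 ≤ c * ‖∑ i, x i • g₂ i‖ ^ 2 := by
  have := (le_iff.mp hle).dotProduct_mulVec_nonneg x
  rw [sub_mulVec, dotProduct_sub, smul_mulVec, dotProduct_smul,
    star_dotProduct_gram_mulVec, star_dotProduct_gram_mulVec,
    real_inner_self_eq_norm_sq, real_inner_self_eq_norm_sq, smul_eq_mul] at this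
  linarith

theorem sq_norm_sum_smul_eq_of_gram_mulVec_eq {g₁ g₂ : ι → H} {c : ℝ} {x : ι → ℝ}
    (hx : gram ℝ g₁ *ᵥ x = c • gram ℝ g₂ *ᵥ x) :
    ‖∑ i, x i • g₁ i‖ ^ 2 = c * ‖∑ i, x i • g₂ i‖ ^ 2 := by
  simpa only [dotProduct_smul, star_dotProduct_gram_mulVec, real_inner_self_eq_norm_sq,
    smul_eq_mul] using congrArg (star x ⬝ᵥ ·) hx

theorem sq_norm_sub_starProjection_span_range_add_le {f h : ι → H}
    (horth : ∀ i j, ⟪f i, h j⟫ = 0) {c : ℝ}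
    (hbound : ∀ x : ι → ℝ, ‖∑ i, x i • h i‖ ^ 2 ≤ c * ‖∑ i, x i • (f + h) i‖ ^ 2) {v : H}
    (hv : v ∈ span ℝ (Set.range f)) :
    ‖v - (span ℝ (Set.range (f + h))).starProjection v‖ ^ 2 ≤ c * ‖v‖ ^ 2 := by
  set L := span ℝ (Set.range (f + h))
  obtain ⟨x, rfl⟩ := (mem_span_range_iff_exists_fun ℝ).1 hv
  have hx := hbound x
  rw [sq_norm_sum_smul_add horth] at hx
  rcases le_total c 1 with hc | hc
  · have hdiff : ∑ i, x i • f i - (1 - c) • ∑ i, x i • (f + h) i =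
        c • ∑ i, x i • f i - (1 - c) • ∑ i, x i • h i := by
      rw [sum_smul_add, smul_add]; module
    calc _ ≤ ‖c • ∑ i, x i • f i - (1 - c) • ∑ i, x i • h i‖ ^ 2 := by
          rw [← hdiff]; gcongr
          exact L.norm_sub_starProjection_le _ (L.smul_mem _ (sum_smul_mem_span_range _ x))
      _ = c ^ 2 * ‖∑ i, x i • f i‖ ^ 2 + (1 - c) ^ 2 * ‖∑ i, x i • h i‖ ^ 2 := by
          rw [norm_sub_sq_real, real_inner_smul_left, real_inner_smul_right,
            inner_sum_smul_sum_smul_eq_zero horth, norm_smul, norm_smul, mul_pow, mul_pow,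
            Real.norm_eq_abs, Real.norm_eq_abs, sq_abs, sq_abs]
          ring
      _ ≤ c * ‖∑ i, x i • f i‖ ^ 2 := by
          nlinarith [mul_le_mul_of_nonneg_left hx (sub_nonneg.2 hc)]
  · calc _ ≤ ‖∑ i, x i • f i - 0‖ ^ 2 := by
          gcongr; exact L.norm_sub_starProjection_le _ L.zero_mem
      _ ≤ c * _ := by rw [sub_zero]; nlinarith [sq_nonneg ‖∑ i, x i • f i‖]

theorem sq_norm_starProjection_span_range_add_le {f h : ι → H} {c : ℝ} (hc : 0 ≤ c)
    (hbound : ∀ x : ι → ℝ, ‖∑ i, x i • h i‖ ^ 2 ≤ c * ‖∑ i, x i • (f + h) i‖ ^ 2) {u : H}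
    (hu : u ∈ (span ℝ (Set.range f))ᗮ) :
    ‖(span ℝ (Set.range (f + h))).starProjection u‖ ^ 2 ≤ c * ‖u‖ ^ 2 := by
  set L := span ℝ (Set.range (f + h))
  obtain ⟨z, hz⟩ := (mem_span_range_iff_exists_fun ℝ).1 (L.starProjection_apply_mem u)
  set q := L.starProjection u
  have hq : ‖q‖ ^ 2 = ⟪u, ∑ i, z i • h i⟫ := by
    have := L.starProjection_inner_eq_zero u q (L.starProjection_apply_mem u)
    rw [inner_sub_left, real_inner_self_eq_norm_sq] at this
    rw [← sub_eq_zero.1 this, ← hz, sum_smul_add, inner_add_right,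
      inner_left_of_mem_orthogonal (sum_smul_mem_span_range f z) hu, zero_add]
  have hCS : ‖q‖ ^ 2 ≤ ‖u‖ * ‖∑ i, z i • h i‖ := hq ▸ real_inner_le_norm _ _
  have hh : ‖∑ i, z i • h i‖ ^ 2 ≤ c * ‖q‖ ^ 2 := hz ▸ hbound z
  rcases (sq_nonneg ‖q‖).eq_or_lt with h0 | hpos
  · rw [← h0]; positivity
  refine le_of_mul_le_mul_right ?_ hpos
  calc ‖q‖ ^ 2 * ‖q‖ ^ 2 ≤ (‖u‖ * ‖∑ i, z i • h i‖) ^ 2 := by rw [← sq]; gcongr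
    _ = ‖u‖ ^ 2 * ‖∑ i, z i • h i‖ ^ 2 := by ring
    _ ≤ ‖u‖ ^ 2 * (c * ‖q‖ ^ 2) := by gcongr
    _ = c * ‖u‖ ^ 2 * ‖q‖ ^ 2 := by ring

theorem starProjection_sub_starProjection_sum_smul_add {f h : ι → H}
    (horth : ∀ i j, ⟪f i, h j⟫ = 0) (x : ι → ℝ) :
    ((span ℝ (Set.range f)).starProjection - (span ℝ (Set.range (f + h))).starProjection)
      (∑ i, x i • (f + h) i) = -∑ i, x i • h i := by
  have hperp : ∑ i, x i • h i ∈ (span ℝ (Set.range f))ᗮ := fun v hv => by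
    obtain ⟨y, rfl⟩ := (mem_span_range_iff_exists_fun ℝ).1 hv
    exact inner_sum_smul_sum_smul_eq_zero horth y x
  rw [_root_.sub_apply,
    eq_starProjection_of_mem_orthogonal' (sum_smul_mem_span_range f x) hperp (sum_smul_add f h x),
    starProjection_eq_self_iff.2 (sum_smul_mem_span_range _ x), sum_smul_add]
  abel

end GramFamilies

theorem stmt_11_general {H : Type*} [NormedAddCommGroup H] [InnerProductSpace ℝ H]
    {n : ℕ} (f h : Fin n → H) (horth : ∀ j l : Fin n, ⟪f j, h l⟫ = 0)
    (A B : Matrix (Fin n) (Fin n) ℝ)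
    (hA : ∀ j l : Fin n, A j l = ⟪f l, f j⟫) (hB : ∀ j l : Fin n, B j l = ⟪h l, h j⟫)
    (hAu : IsUnit A.det)
    (P Q : H →L[ℝ] H)
    (hP : ∀ v : H, P v ∈ Submodule.span ℝ (Set.range f) ∧
      ∀ w ∈ Submodule.span ℝ (Set.range f), ⟪v - P v, w⟫ = 0)
    (hQ : ∀ v : H, Q v ∈ Submodule.span ℝ (Set.range fun j : Fin n => f j + h j) ∧
      ∀ w ∈ Submodule.span ℝ (Set.range fun j : Fin n => f j + h j), ⟪v - Q v, w⟫ = 0)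
    (c : ℝ)
    (hc : IsGreatest
      {r : ℝ | ∃ v : Fin n → ℝ, v ≠ 0 ∧ (B * (A + B)⁻¹).mulVec v = r • v} c) :
    ‖P - Q‖ ^ 2 = c := by
  obtain rfl : A = gram ℝ f := Matrix.ext fun j l => (hA j l).trans (real_inner_comm _ _)
  obtain rfl : B = gram ℝ h := Matrix.ext fun j l => (hB j l).trans (real_inner_comm _ _)
  obtain rfl : P = (span ℝ (Set.range f)).starProjection :=
    eq_starProjection_of_forall_mem_of_inner_eq_zero hP
  obtain rfl : Q = (span ℝ (Set.range (f + h))).starProjection :=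
    eq_starProjection_of_forall_mem_of_inner_eq_zero hQ
  rw [← gram_add_of_inner_eq_zero horth] at hc
  have hApd : (gram ℝ f).PosDef := (posSemidef_gram ℝ f).posDef_iff_det_ne_zero.2 hAu.ne_zero
  have hG : (gram ℝ (f + h)).PosDef :=
    gram_add_of_inner_eq_zero horth ▸ hApd.add_posSemidef (posSemidef_gram ℝ h)
  have hbound := sq_norm_sum_smul_le_of_gram_le (le_smul_of_forall_mem_spectrum_mul_inv_le
    (isHermitian_gram ℝ h) hG fun r hr => hc.2 (exists_mulVec_eq_smul_of_mem_spectrum hr))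
  obtain ⟨z, hz0, hz⟩ := exists_mulVec_eq_smul_mulVec_of_mul_inv hG.isUnit hc.1
  have hw : ∑ i, z i • (f + h) i ≠ 0 := fun h0 =>
    hz0 (funext (Fintype.linearIndependent_iff.1 (linearIndependent_of_posDef_gram hG) z h0))
  have heq := sq_norm_sum_smul_eq_of_gram_mulVec_eq hz
  have hc0 : 0 ≤ c := nonneg_of_mul_nonneg_left (heq ▸ sq_nonneg _) (pow_pos (norm_pos_iff.2 hw) 2)
  refine ContinuousLinearMap.sq_opNorm_eq_of_forall_le_of_eq _ (fun w => ?_) hw ?_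
  · exact sq_norm_starProjection_sub_starProjection_apply_le _ _
      (fun v hv => sq_norm_sub_starProjection_span_range_add_le horth hbound hv)
      (fun u hu => sq_norm_starProjection_span_range_add_le hc0 hbound hu) w
  · rw [starProjection_sub_starProjection_sum_smul_add horth, norm_neg, heq]

/-- For vectors `f j ⊥ h l` with nonsingular Gram matrices `A = [⟪f k, f j⟫]` and
`B = [⟪h k, h j⟫]`, the orthogonal projections `P` onto `U = span{f j}` and `Q` onto
`Ũ = span{f j + h j}` satisfy `‖P - Q‖² = λ_max(B (A + B)⁻¹)`. -/
theorem stmt_11 {H : Type*} [NormedAddCommGroup H] [InnerProductSpace ℝ H]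
    {n : ℕ} (f h : Fin n → H) (horth : ∀ j l : Fin n, ⟪f j, h l⟫ = 0)
    (A B : Matrix (Fin n) (Fin n) ℝ)
    (hA : ∀ j l : Fin n, A j l = ⟪f l, f j⟫) (hB : ∀ j l : Fin n, B j l = ⟪h l, h j⟫)
    (hAu : IsUnit A.det) (hBu : IsUnit B.det)
    (P Q : H →L[ℝ] H)
    (hP : ∀ v : H, P v ∈ Submodule.span ℝ (Set.range f) ∧
      ∀ w ∈ Submodule.span ℝ (Set.range f), ⟪v - P v, w⟫ = 0)
    (hQ : ∀ v : H, Q v ∈ Submodule.span ℝ (Set.range fun j : Fin n => f j + h j) ∧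
      ∀ w ∈ Submodule.span ℝ (Set.range fun j : Fin n => f j + h j), ⟪v - Q v, w⟫ = 0)
    (c : ℝ)
    (hc : IsGreatest
      {r : ℝ | ∃ v : Fin n → ℝ, v ≠ 0 ∧ (B * (A + B)⁻¹).mulVec v = r • v} c) :
    ‖P - Q‖ ^ 2 = c :=
  stmt_11_general f h horth A B hA hB hAu P Q hP hQ c hc
end

section
/- For the exponential kernel K(x,y) = e^{-|x-y|} on ℝ, Ω = [a,b], L = b - a, and two sampling points x_1 ≤ x_2, the quantity sup_{x_1,x_2} min_{x∈Ω} V(x,x_1,x_2), where V(x,x_1,x_2) = (e^{-2|x_1-x|} + e^{-2|x_2-x|} - 2e^{-(|x_1-x|+|x_2-x|+|x_1-x_2|)})/(1 - e^{-2|x_1-x_2|}), equals (−e^{−L} + sqrt(e^{−2L} + 8e^{−L}))/2, attained at x_1 = a − (1/2)ln((−e^{−L}+sqrt(e^{−2L}+8e^{−L}))/2) and x_2 = b + (1/2)ln((−e^{−L}+sqrt(e^{−2L}+8e^{−L}))/2). -/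
/-- `V(x, x₁, x₂) = 1 - dist²(K(x,·), span{K(x₁,·), K(x₂,·)})` for the exponential kernel
`K(x,y) = e^{-|x-y|}` on `ℝ`. -/
noncomputable def expKernelV (x x₁ x₂ : ℝ) : ℝ :=
  (Real.exp (-2 * |x₁ - x|) + Real.exp (-2 * |x₂ - x|) -
      2 * Real.exp (-(|x₁ - x| + |x₂ - x| + |x₁ - x₂|))) /
    (1 - Real.exp (-2 * |x₁ - x₂|))

lemma Vmid {x x₁ x₂ : ℝ} (h1 : x₁ ≤ x) (h2 : x ≤ x₂) :
    expKernelV x x₁ x₂ =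
      (Real.exp (-2*(x - x₁)) + Real.exp (-2*(x₂ - x)) - 2 * Real.exp (-2*(x₂ - x₁))) /
        (1 - Real.exp (-2*(x₂ - x₁))) := by
  unfold expKernelV
  rw [abs_of_nonpos (by linarith : x₁ - x ≤ 0), abs_of_nonneg (by linarith : (0:ℝ) ≤ x₂ - x),
    abs_of_nonpos (by linarith : x₁ - x₂ ≤ 0)]
  have e1 : -2 * -(x₁ - x) = -2*(x - x₁) := by ring
  have e2 : -(-(x₁ - x) + (x₂ - x) + -(x₁ - x₂)) = -2*(x₂ - x₁) := by ring
  have e3 : -2 * -(x₁ - x₂) = -2*(x₂ - x₁) := by ring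
  rw [e1, e2, e3]

lemma Vleft {x x₁ x₂ : ℝ} (h1 : x ≤ x₁) (h12 : x₁ < x₂) :
    expKernelV x x₁ x₂ = Real.exp (-2*(x₁ - x)) := by
  unfold expKernelV
  rw [abs_of_nonneg (by linarith : (0:ℝ) ≤ x₁ - x), abs_of_nonneg (by linarith : (0:ℝ) ≤ x₂ - x),
    abs_of_nonpos (by linarith : x₁ - x₂ ≤ 0)]
  have hd : Real.exp (-2 * -(x₁ - x₂)) < 1 := by
    rw [Real.exp_lt_one_iff]; linarith
  have e1 : Real.exp (-2 * (x₂ - x)) = Real.exp (-2*(x₁ - x)) * Real.exp (-2 * -(x₁ - x₂)) := by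
    rw [← Real.exp_add]; congr 1; ring
  have e2 : Real.exp (-((x₁ - x) + (x₂ - x) + -(x₁ - x₂))) = Real.exp (-2 * (x₂ - x)) := by
    congr 1; ring
  rw [e2, e1, div_eq_iff (by intro h; nlinarith : (1 - Real.exp (-2 * -(x₁ - x₂))) ≠ 0)]
  ring

lemma Vright {x x₁ x₂ : ℝ} (h2 : x₂ ≤ x) (h12 : x₁ < x₂) :
    expKernelV x x₁ x₂ = Real.exp (-2*(x - x₂)) := by
  unfold expKernelV
  rw [abs_of_nonpos (by linarith : x₁ - x ≤ 0), abs_of_nonpos (by linarith : x₂ - x ≤ 0),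
    abs_of_nonpos (by linarith : x₁ - x₂ ≤ 0)]
  have hd : Real.exp (-2 * -(x₁ - x₂)) < 1 := by
    rw [Real.exp_lt_one_iff]; linarith
  have e1 : Real.exp (-2 * -(x₁ - x)) = Real.exp (-2*(x - x₂)) * Real.exp (-2 * -(x₁ - x₂)) := by
    rw [← Real.exp_add]; congr 1; ring
  have e2 : Real.exp (-(-(x₁ - x) + -(x₂ - x) + -(x₁ - x₂))) = Real.exp (-2 * -(x₁ - x)) := by
    congr 1; ring
  rw [e2, e1, div_eq_iff (by intro h; nlinarith : (1 - Real.exp (-2 * -(x₁ - x₂))) ≠ 0)]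
  ring

lemma mid_lower (t c p q : ℝ) (ht : 0 < t) (hc0 : 0 < c) (htc : t < c)
    (hsq : c^2 + c*t = 2*t) (hpq : c * (p * q) = t) (hp : 0 < p) (hq : 0 < q) :
    c ≤ (p^2 + q^2 - 2*(p*q)^2) / (1 - (p*q)^2) := by
  have hpq0 : 0 < p * q := mul_pos hp hq
  have hpq1 : p * q < 1 := by nlinarith
  have hden : 0 < 1 - (p*q)^2 := by nlinarith
  rw [le_div_iff₀ hden]
  have hpq2 : c^2 * (p*q)^2 = t^2 := by nlinarith [hpq]
  have e1 : t*c^2 + c*t^2 = 2*t^2 := by nlinarith [hsq]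
  have e2 : c^3 + c^2*t = 2*t*c := by nlinarith [hsq]
  have e3 : c^3*(p*q)^2 = c*t^2 := by nlinarith [hpq2]
  have e4 : c^2*(p*q) = c*t := by nlinarith [hpq]
  nlinarith [mul_nonneg (mul_nonneg hc0.le hc0.le) (sq_nonneg (p - q)),
    mul_pos hc0 hc0, hpq2, e1, e2, e3, e4]

lemma side_contra (t c S R : ℝ) (ht : 0 < t) (ht1 : t < 1) (hc0 : 0 < c) (hc1 : c < 1)
    (hsq : c^2 + c*t = 2*t) (hR : 0 < R) (hRS : R < S) (hS1 : S < 1)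
    (hSt : c*S < t^2) (h1 : c*(1 - S*R) < S + R - 2*S*R) : False := by
  have hd : 0 < 1 - S*R := by nlinarith
  have hS0 : 0 < S := lt_trans hR hRS
  have hkey : c*(1+S) < 2*S := by
    nlinarith [mul_pos (sub_pos.2 hRS) (sub_pos.2 hS1), mul_pos hd (mul_pos hS0 hS0)]
  have h2c : (0:ℝ) < 2 - c := by linarith
  nlinarith [mul_lt_mul_of_pos_left hkey hc0, mul_lt_mul_of_pos_left hSt h2c,
    mul_pos (mul_pos ht h2c) (sub_pos.2 ht1)]

lemma mid_contra (t c w : ℝ) (ht : 0 < t) (ht1 : t < 1) (hc0 : 0 < c) (hc1 : c < 1)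
    (hsq : c^2 + c*t = 2*t) (hw : 0 < w) (hw1 : w < 1) (hwt : c*w < t)
    (h1 : c*(1 - w^2) < w + w - 2*w^2) : False := by
  have hkey : c*(1+w) < 2*w := by nlinarith [sq_nonneg (1 - w)]
  have h2c : (0:ℝ) < 2 - c := by linarith
  nlinarith [mul_lt_mul_of_pos_left hkey hc0, mul_lt_mul_of_pos_left hwt h2c,
    mul_pos (mul_pos ht h2c) (sub_pos.2 ht1)]


set_option maxHeartbeats 1000000 in
/-- For the exponential kernel on `Ω = [a,b]` with `L = b - a`, the optimal value
`sup_{x₁ ≤ x₂} min_{x ∈ Ω} V(x, x₁, x₂)` equals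
`c = (-e^{-L} + √(e^{-2L} + 8 e^{-L}))/2`, attained at the points
`x₁ = a - ln(c)/2` and `x₂ = b + ln(c)/2`. -/
theorem stmt_18 (a b : ℝ) (hab : a < b) (L c : ℝ) (hL : L = b - a)
    (hc : c = (-Real.exp (-L) + Real.sqrt (Real.exp (-2 * L) + 8 * Real.exp (-L))) / 2) :
    IsGreatest {m : ℝ | ∃ x₁ x₂ : ℝ, x₁ ≤ x₂ ∧
        IsLeast {v : ℝ | ∃ x ∈ Set.Icc a b, v = expKernelV x x₁ x₂} m} c ∧
      IsLeast {v : ℝ | ∃ x ∈ Set.Icc a b,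
        v = expKernelV x (a - Real.log c / 2) (b + Real.log c / 2)} c := by
  have hL0 : 0 < L := by rw [hL]; linarith
  set t := Real.exp (-L) with htdef
  have ht : 0 < t := Real.exp_pos _
  have ht1 : t < 1 := by rw [htdef, Real.exp_lt_one_iff]; linarith
  have h2L : Real.exp (-2 * L) = t^2 := by
    rw [htdef, sq, ← Real.exp_add]; congr 1; ring
  have hsnn : (0:ℝ) ≤ t^2 + 8*t := by positivity
  have h5 : Real.sqrt (t^2 + 8*t) = 2*c + t := by
    rw [hc, h2L]; ring_nf
  have h6 : (2*c + t)^2 = t^2 + 8*t := by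
    rw [← h5, Real.sq_sqrt hsnn]
  have hnn : (0:ℝ) ≤ 2*c + t := h5 ▸ Real.sqrt_nonneg _
  have hc0 : 0 < c := by nlinarith [h6, hnn]
  have hsq : c^2 + c*t = 2*t := by nlinarith [h6]
  have hc1 : c < 1 := by nlinarith [hsq]
  have htc : t < c := by nlinarith [hsq]
  set lc := Real.log c with hlcdef
  have hlc : Real.exp lc = c := Real.exp_log hc0
  have hlc0 : lc < 0 := Real.log_neg hc0 hc1
  have hlcL : -L < lc := by
    rw [hlcdef, ← Real.log_exp (-L)]
    exact Real.log_lt_log (Real.exp_pos _) htc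
  set x₁ := a - lc/2 with hx1def
  set x₂ := b + lc/2 with hx2def
  have h12 : x₁ < x₂ := by rw [hx1def, hx2def]; linarith
  -- key exp identities
  have hcw : c * Real.exp (-(L + lc)) = t := by
    rw [← hlc, ← Real.exp_add, htdef]; congr 1; ring
  have hct2 : c * Real.exp (-2*L - lc) = t^2 := by
    rw [← hlc, ← Real.exp_add, ← h2L]; congr 1; ring
  clear_value t lc x₁ x₂
  -- Part 2 : IsLeast
  have hP2 : IsLeast {v : ℝ | ∃ x ∈ Set.Icc a b, v = expKernelV x x₁ x₂} c := by
    constructor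
    · refine ⟨a, ⟨le_refl a, hab.le⟩, ?_⟩
      rw [Vleft (by rw [hx1def]; linarith) h12]
      rw [show -2*(x₁ - a) = lc by rw [hx1def]; ring, hlc]
    · rintro v ⟨x, ⟨hxa, hxb⟩, rfl⟩
      rcases le_or_gt x x₁ with h | h
      · rw [Vleft h h12]
        calc c = Real.exp lc := hlc.symm
          _ ≤ _ := Real.exp_le_exp.2 (by rw [hx1def] at h ⊢; linarith)
      rcases le_or_gt x₂ x with h2 | h2
      · rw [Vright h2 h12]
        calc c = Real.exp lc := hlc.symm
          _ ≤ _ := Real.exp_le_exp.2 (by rw [hx2def] at h2 ⊢; linarith)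
      · rw [Vmid h.le h2.le]
        have ep : Real.exp (-2*(x - x₁)) = Real.exp (-(x - x₁))^2 := by
          rw [sq, ← Real.exp_add]; congr 1; ring
        have eq' : Real.exp (-2*(x₂ - x)) = Real.exp (-(x₂ - x))^2 := by
          rw [sq, ← Real.exp_add]; congr 1; ring
        have epq : Real.exp (-(x - x₁)) * Real.exp (-(x₂ - x)) = Real.exp (-(L + lc)) := by
          rw [← Real.exp_add]; congr 1; rw [hx1def, hx2def, hL]; ring
        have ed : Real.exp (-2*(x₂ - x₁)) =
            (Real.exp (-(x - x₁)) * Real.exp (-(x₂ - x)))^2 := by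
          rw [epq, sq, ← Real.exp_add]; congr 1; rw [hx1def, hx2def, hL]; ring
        rw [ep, eq', ed]
        exact mid_lower t c _ _ ht hc0 htc hsq (by rw [epq]; exact hcw)
          (Real.exp_pos _) (Real.exp_pos _)
  refine ⟨⟨⟨x₁, x₂, h12.le, hP2⟩, ?_⟩, hP2⟩
  -- upper bound
  rintro m ⟨y₁, y₂, hy12, hm⟩
  rcases eq_or_lt_of_le hy12 with rfl | hlt
  · have h0 : expKernelV a y₁ y₁ = 0 := by
      unfold expKernelV; simp
    have := hm.2 ⟨a, ⟨le_refl a, hab.le⟩, h0.symm⟩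
    linarith
  by_contra hmc
  push_neg at hmc
  have hV : ∀ x ∈ Set.Icc a b, c < expKernelV x y₁ y₂ := fun x hx =>
    lt_of_lt_of_le hmc (hm.2 ⟨x, hx, rfl⟩)
  have hA : y₁ - a < -lc/2 := by
    rcases le_or_gt y₁ a with h | h
    · linarith
    · have hv := hV a ⟨le_refl a, hab.le⟩
      rw [Vleft h.le hlt] at hv
      have := Real.log_lt_log hc0 hv
      rw [Real.log_exp] at this
      rw [← hlcdef] at this
      linarith
  have hB : b - y₂ < -lc/2 := by
    rcases le_or_gt b y₂ with h | h
    · linarith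
    · have hv := hV b ⟨hab.le, le_refl b⟩
      rw [Vright h.le hlt] at hv
      have := Real.log_lt_log hc0 hv
      rw [Real.log_exp] at this
      rw [← hlcdef] at this
      linarith
  rcases lt_or_ge ((y₁ + y₂)/2) a with hma | hma
  · -- midpoint left of a
    have hy1a : y₁ < a := by linarith
    have hay2 : a < y₂ := by linarith
    have hv := hV a ⟨le_refl a, hab.le⟩
    rw [Vmid hy1a.le hay2.le] at hv
    have eSR : Real.exp (-2*(y₂ - y₁)) =
        Real.exp (-2*(y₂ - a)) * Real.exp (-2*(a - y₁)) := by
      rw [← Real.exp_add]; congr 1; ring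
    rw [eSR] at hv
    have hd : Real.exp (-2*(y₂ - a)) * Real.exp (-2*(a - y₁)) < 1 := by
      rw [← eSR, Real.exp_lt_one_iff]; linarith
    rw [lt_div_iff₀ (by linarith)] at hv
    have hSt : c * Real.exp (-2*(y₂ - a)) < t^2 := by
      calc c * Real.exp (-2*(y₂ - a)) < c * Real.exp (-2*L - lc) := by
            apply mul_lt_mul_of_pos_left _ hc0
            exact Real.exp_lt_exp.2 (by rw [hL]; linarith)
        _ = t^2 := hct2
    refine side_contra t c (Real.exp (-2*(y₂ - a))) (Real.exp (-2*(a - y₁)))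
      ht ht1 hc0 hc1 hsq (Real.exp_pos _)
      (Real.exp_lt_exp.2 (by linarith)) (Real.exp_lt_one_iff.2 (by linarith))
      hSt (by linarith)
  rcases lt_or_ge b ((y₁ + y₂)/2) with hmb | hmb
  · -- midpoint right of b
    have hy1b : y₁ < b := by linarith
    have hby2 : b < y₂ := by linarith
    have hv := hV b ⟨hab.le, le_refl b⟩
    rw [Vmid hy1b.le hby2.le] at hv
    have eSR : Real.exp (-2*(y₂ - y₁)) =
        Real.exp (-2*(b - y₁)) * Real.exp (-2*(y₂ - b)) := by
      rw [← Real.exp_add]; congr 1; ring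
    rw [eSR] at hv
    have hd : Real.exp (-2*(b - y₁)) * Real.exp (-2*(y₂ - b)) < 1 := by
      rw [← eSR, Real.exp_lt_one_iff]; linarith
    rw [lt_div_iff₀ (by linarith)] at hv
    have hSt : c * Real.exp (-2*(b - y₁)) < t^2 := by
      calc c * Real.exp (-2*(b - y₁)) < c * Real.exp (-2*L - lc) := by
            apply mul_lt_mul_of_pos_left _ hc0
            exact Real.exp_lt_exp.2 (by rw [hL]; linarith)
        _ = t^2 := hct2
    refine side_contra t c (Real.exp (-2*(b - y₁))) (Real.exp (-2*(y₂ - b)))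
      ht ht1 hc0 hc1 hsq (Real.exp_pos _)
      (Real.exp_lt_exp.2 (by linarith)) (Real.exp_lt_one_iff.2 (by linarith))
      hSt (by linarith)
  · -- midpoint inside [a,b]
    have hv := hV ((y₁ + y₂)/2) ⟨hma, hmb⟩
    rw [Vmid (by linarith) (by linarith)] at hv
    have e1 : Real.exp (-2*((y₁ + y₂)/2 - y₁)) = Real.exp (-(y₂ - y₁)) := by
      congr 1; ring
    have e2 : Real.exp (-2*(y₂ - (y₁ + y₂)/2)) = Real.exp (-(y₂ - y₁)) := by
      congr 1; ring
    have e3 : Real.exp (-2*(y₂ - y₁)) = Real.exp (-(y₂ - y₁))^2 := by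
      rw [sq, ← Real.exp_add]; congr 1; ring
    rw [e1, e2, e3] at hv
    have hw1 : Real.exp (-(y₂ - y₁)) < 1 := Real.exp_lt_one_iff.2 (by linarith)
    have hden : 0 < 1 - Real.exp (-(y₂ - y₁))^2 := by
      have h := Real.exp_pos (-(y₂ - y₁))
      have h2 : 0 < (1 - Real.exp (-(y₂ - y₁))) * (1 + Real.exp (-(y₂ - y₁))) :=
        mul_pos (by linarith) (by linarith)
      have h3 : (1 - Real.exp (-(y₂ - y₁))) * (1 + Real.exp (-(y₂ - y₁)))
          = 1 - Real.exp (-(y₂ - y₁))^2 := by ring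
      linarith [h2, h3.symm.le]
    rw [lt_div_iff₀ hden] at hv
    have hwt : c * Real.exp (-(y₂ - y₁)) < t := by
      calc c * Real.exp (-(y₂ - y₁)) < c * Real.exp (-(L + lc)) := by
            apply mul_lt_mul_of_pos_left _ hc0
            exact Real.exp_lt_exp.2 (by rw [hL]; linarith)
        _ = t := hcw
    exact mid_contra t c (Real.exp (-(y₂ - y₁))) ht ht1 hc0 hc1 hsq (Real.exp_pos _) hw1 hwt (by linarith)
end
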